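/- Let V_d = ℂ² ⊗ ℂ[z]/(z^{d+1}) with the action of 𝔤_d = 𝔰𝔩₂ ⊗ ℂ[z]/(z^{d+1}). For 0 ≤ n ≤ d+1, the set of x ∈ V_d with min.deg x = n (where min.deg 0 := d+1) equals the set of elements whose 𝔤_d-orbit tangent space 𝔤_d.x has dimension exactly 2(d+1−n), and this set has dimension 2(d+1−n) as an algebraic variety (it is (T∖{0})z^n ⊕ Tz^{n+1} ⊕ ... ⊕ Tz^d). Consequently the modality of the 𝔤_d-action on V_d is 0: for every s, the locus of points with orbit dimension s has dimension at most s. -/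

import Mathlib

open Polynomial

noncomputable abbrev Rtc (d : ℕ) := Polynomial ℂ ⧸ Ideal.span {(X : Polynomial ℂ) ^ (d + 1)}

noncomputable def zz (d : ℕ) : Rtc d := Ideal.Quotient.mk _ X

/-- `η ↦ η.mulVec x`, linear in the matrix `η`. -/
noncomputable def mulVecRight (d : ℕ) (x : Fin 2 → Rtc d) :
    Matrix (Fin 2) (Fin 2) (Rtc d) →ₗ[Rtc d] (Fin 2 → Rtc d) where
  toFun A := A.mulVec x
  map_add' A B := Matrix.add_mulVec A B x
  map_smul' c A := by
    simp only [RingHom.id_apply]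
    exact Matrix.smul_mulVec c A x

/-- The orbit tangent space `𝔤_d.x = {η.x : η ∈ 𝔰𝔩₂ ⊗ ℂ[z]/(z^{d+1})}`, as a `ℂ`-submodule. -/
noncomputable def orbitTangent (d : ℕ) (x : Fin 2 → Rtc d) :
    Submodule ℂ (Fin 2 → Rtc d) :=
  Submodule.restrictScalars ℂ
    ((LinearMap.ker (Matrix.traceLinearMap (Fin 2) (Rtc d) (Rtc d))).map (mulVecRight d x))

/-- `min.deg x = n` (with `min.deg 0 = d+1`): `x` is divisible by `z^n` but, unless `n = d+1`,
not by `z^{n+1}`. -/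
def MinDegEq (d n : ℕ) (x : Fin 2 → Rtc d) : Prop :=
  (∃ y, x = (zz d) ^ n • y) ∧ (n = d + 1 ∨ ¬∃ y, x = (zz d) ^ (n + 1) • y)

/-!
Over any commutative ring `R`, a traceless `2 × 2` matrix can send a unimodular vector `y`
(one with `w ⬝ᵥ y = 1` for some `w`) to any vector, so `𝔰𝔩₂(R).(c • y) = c • R²`.
The ring `R = ℂ[z]/(z^{d+1})` is local with maximal ideal `(z)`, so an `x` of min.deg `n` is
`z^n • y` with `y` unimodular, and `𝔤_d.x = z^n R²`. The latter has the `ℂ`-basis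
`z^k e_i` (`n ≤ k ≤ d`) cut out of the power basis of `R²`, hence dimension `2(d+1-n)`.
Conversely, every `x` has some min.deg `m ≤ d + 1`, and `2(d+1-m)` determines `m`.
-/

open Matrix Module Submodule
open LinearMap (lsmul)

theorem Matrix.exists_trace_eq_zero_mulVec_eq {R : Type*} [CommRing R] {w y : Fin 2 → R}
    (hwy : w ⬝ᵥ y = 1) (v : Fin 2 → R) :
    ∃ A : Matrix (Fin 2) (Fin 2) R, A.trace = 0 ∧ A *ᵥ y = v := by
  rw [vec2_dotProduct] at hwy
  set t := w 0 * v 0 + w 1 * v 1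
  -- `vecMulVec v w` maps `y` to `v`; subtracting `t • vecMulVec ![-w 1, w 0] ![-y 1, y 0]`,
  -- which kills `y`, makes the trace vanish.
  refine ⟨!![v 0 * w 0 - t * w 1 * y 1, v 0 * w 1 + t * w 1 * y 0;
    v 1 * w 0 + t * w 0 * y 1, v 1 * w 1 - t * w 0 * y 0], ?_, ?_⟩
  · simp only [trace_fin_two, of_apply, cons_val', cons_val_zero, cons_val_one, cons_val_fin_one]
    linear_combination (-t) * hwy
  · ext i
    fin_cases i <;>
      simp only [mulVec, dotProduct, Fin.sum_univ_two, of_apply, cons_val', cons_val_zero,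
        cons_val_one, cons_val_fin_one, Fin.zero_eta, Fin.mk_one, Fin.isValue] <;>
      linear_combination v _ * hwy

section Truncated

variable {d : ℕ}

theorem map_ker_trace_mulVecRight_smul (c : Rtc d) {w y : Fin 2 → Rtc d} (hwy : w ⬝ᵥ y = 1) :
    (LinearMap.ker (traceLinearMap (Fin 2) (Rtc d) (Rtc d))).map (mulVecRight d (c • y))
      = LinearMap.range (lsmul (Rtc d) (Fin 2 → Rtc d) c) := by
  ext v
  simp only [mem_map, LinearMap.mem_ker, LinearMap.mem_range, LinearMap.lsmul_apply]
  constructor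
  · rintro ⟨A, -, rfl⟩
    exact ⟨A *ᵥ y, (mulVec_smul A c y).symm⟩
  · rintro ⟨u, rfl⟩
    obtain ⟨A, hA, hAy⟩ := exists_trace_eq_zero_mulVec_eq hwy u
    exact ⟨A, hA, hAy ▸ mulVec_smul A c y⟩

theorem zz_pow_eq_zero : zz d ^ (d + 1) = 0 := by
  rw [zz, ← map_pow, Ideal.Quotient.eq_zero_iff_mem]
  exact Ideal.subset_span rfl

theorem zz_pow_eq_zero_of_le {k : ℕ} (hk : d + 1 ≤ k) : zz d ^ k = 0 :=
  pow_eq_zero_of_le hk zz_pow_eq_zero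

theorem isUnit_or_exists_eq_zz_mul (r : Rtc d) : IsUnit r ∨ ∃ s, r = zz d * s := by
  obtain ⟨p, rfl⟩ := Ideal.Quotient.mk_surjective r
  have hp : Ideal.Quotient.mk _ p
      = Ideal.Quotient.mk _ (C (p.coeff 0)) + zz d * Ideal.Quotient.mk _ p.divX := by
    conv_lhs => rw [← X_mul_divX_add p]
    rw [map_add, map_mul]
    exact add_comm _ _
  by_cases h0 : p.coeff 0 = 0
  · exact Or.inr ⟨_, by rw [hp, h0, C_0, map_zero, zero_add]⟩
  · refine Or.inl (hp ▸ IsNilpotent.isUnit_add_left_of_commute ?_ ?_ (Commute.all _ _))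
    · exact (Commute.all _ _).isNilpotent_mul_right ⟨d + 1, zz_pow_eq_zero⟩
    · exact (isUnit_C.2 (Ne.isUnit h0)).map _

theorem MinDegEq.exists_dotProduct_eq_one {n : ℕ} {x : Fin 2 → Rtc d} (hx : MinDegEq d n x) :
    ∃ w y : Fin 2 → Rtc d, w ⬝ᵥ y = 1 ∧ x = zz d ^ n • y := by
  obtain ⟨y, rfl⟩ := hx.1
  rcases hx.2 with rfl | hndvd
  · refine ⟨Pi.single 0 1, Pi.single 0 1, by simp, ?_⟩
    ext i
    simp [zz_pow_eq_zero]
  · obtain ⟨i, u, hu⟩ : ∃ i, IsUnit (y i) := by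
      by_contra! h
      choose s hs using fun i => (isUnit_or_exists_eq_zz_mul (y i)).resolve_left (h i)
      exact hndvd ⟨s, by ext i; simp [hs, pow_succ, mul_assoc]⟩
    exact ⟨Pi.single i ↑u⁻¹, y, by rw [single_dotProduct, ← hu, Units.inv_mul], rfl⟩

theorem exists_minDegEq (x : Fin 2 → Rtc d) : ∃ n ≤ d + 1, MinDegEq d n x := by
  classical
  let P : ℕ → Prop := fun k => ∃ y, x = zz d ^ k • y
  have hP0 : P 0 := ⟨x, (one_smul _ x).symm⟩
  refine ⟨Nat.findGreatest P (d + 1), Nat.findGreatest_le _,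
    Nat.findGreatest_spec (Nat.zero_le _) hP0, ?_⟩
  by_cases h : Nat.findGreatest P (d + 1) = d + 1
  · exact Or.inl h
  · exact Or.inr (Nat.findGreatest_is_greatest (Nat.lt_succ_self _)
      ((Nat.findGreatest_le _).lt_of_ne h))

noncomputable def powerBasisRtc (d : ℕ) : PowerBasis ℂ (Rtc d) :=
  AdjoinRoot.powerBasis' (monic_X_pow (d + 1))

theorem powerBasisRtc_dim : (powerBasisRtc d).dim = d + 1 :=
  natDegree_X_pow _

theorem powerBasisRtc_basis_apply (i : Fin (powerBasisRtc d).dim) :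
    (powerBasisRtc d).basis i = zz d ^ (i : ℕ) := by
  rw [PowerBasis.coe_basis]
  rfl

theorem linearIndependent_zz_pow_add (n : ℕ) :
    LinearIndependent ℂ fun j : Fin (d + 1 - n) => zz d ^ (n + j : ℕ) := by
  let f : Fin (d + 1 - n) → Fin (powerBasisRtc d).dim :=
    fun j => ⟨n + j, by rw [powerBasisRtc_dim]; omega⟩
  have hf : Function.Injective f := fun j k hjk => Fin.ext (by simpa [f] using hjk)
  have h := (powerBasisRtc d).basis.linearIndependent.comp f hf
  simp only [Function.comp_def, powerBasisRtc_basis_apply] at h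
  exact h

theorem smul_single_zz_pow (n k : ℕ) (i : Fin 2) :
    zz d ^ n • (Pi.single i (zz d ^ k) : Fin 2 → Rtc d) = Pi.single i (zz d ^ (n + k)) := by
  ext j
  rcases eq_or_ne j i with rfl | hji
  · simp [pow_add (zz d)]
  · simp [hji]

theorem finrank_range_lsmul_zz_pow (n : ℕ) :
    finrank ℂ ((LinearMap.range (lsmul (Rtc d) (Fin 2 → Rtc d) (zz d ^ n))).restrictScalars ℂ)
      = 2 * (d + 1 - n) := by
  classical
  let e : (Σ _ : Fin 2, Fin (d + 1 - n)) → Fin 2 → Rtc d :=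
    fun ij => Pi.single ij.1 (zz d ^ (n + ij.2 : ℕ))
  have he : LinearIndependent ℂ e :=
    Pi.linearIndependent_single (fun _ (j : Fin (d + 1 - n)) => zz d ^ (n + j : ℕ)) fun _ =>
      linearIndependent_zz_pow_add n
  have hspan : span ℂ (Set.range e) =
      (LinearMap.range (lsmul (Rtc d) (Fin 2 → Rtc d) (zz d ^ n))).restrictScalars ℂ := by
    refine le_antisymm (span_le.2 ?_) ?_
    · rintro _ ⟨⟨i, j⟩, rfl⟩
      exact ⟨Pi.single i (zz d ^ (j : ℕ)), smul_single_zz_pow n j i⟩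
    · let b := Pi.basis fun _ : Fin 2 => (powerBasisRtc d).basis
      have hb : (⊤ : Submodule ℂ (Fin 2 → Rtc d)) = span ℂ (Set.range b) := b.span_eq.symm
      rw [← LinearMap.range_restrictScalars, LinearMap.range_eq_map, hb, map_span, span_le]
      rintro _ ⟨_, ⟨⟨i, k⟩, rfl⟩, rfl⟩
      have hk : zz d ^ n • b ⟨i, k⟩ = Pi.single i (zz d ^ (n + k : ℕ)) := by
        rw [Pi.basis_apply, powerBasisRtc_basis_apply]
        exact smul_single_zz_pow n k i
      by_cases hnk : n + k < d + 1
      · exact subset_span ⟨⟨i, ⟨k, by omega⟩⟩, hk.symm⟩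
      · simp [hk, zz_pow_eq_zero_of_le (not_lt.1 hnk)]
  rw [← hspan, finrank_span_eq_card he]
  simp

theorem finrank_orbitTangent_of_minDegEq {n : ℕ} {x : Fin 2 → Rtc d} (hx : MinDegEq d n x) :
    finrank ℂ (orbitTangent d x) = 2 * (d + 1 - n) := by
  obtain ⟨w, y, hwy, rfl⟩ := hx.exists_dotProduct_eq_one
  rw [orbitTangent, map_ker_trace_mulVecRight_smul _ hwy, finrank_range_lsmul_zz_pow]

end Truncated

/-- the locus `{min.deg x = n}` equals the locus where the orbit tangent space
`𝔤_d.x` has dimension `2(d+1−n)`; this locus is contained in the linear subspace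
`z^n·V_d` of dimension `2(d+1−n)` (it is `(T∖0)z^n ⊕ Tz^{n+1} ⊕ ⋯ ⊕ Tz^d`); hence the
modality of the `𝔤_d`-action on `V_d` is `0`. -/
theorem stmt5 (d n : ℕ) (hn : n ≤ d + 1) :
    (∀ x : Fin 2 → Rtc d,
      MinDegEq d n x ↔ Module.finrank ℂ (orbitTangent d x) = 2 * (d + 1 - n)) ∧
    (∀ x : Fin 2 → Rtc d, MinDegEq d n x →
      x ∈ LinearMap.range ((LinearMap.lsmul (Rtc d) (Fin 2 → Rtc d)) ((zz d) ^ n))) ∧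
    Module.finrank ℂ (Submodule.restrictScalars ℂ
      (LinearMap.range ((LinearMap.lsmul (Rtc d) (Fin 2 → Rtc d)) ((zz d) ^ n))))
      = 2 * (d + 1 - n) := by
  refine ⟨fun x => ⟨finrank_orbitTangent_of_minDegEq, fun hx => ?_⟩,
    fun x hx => ?_, finrank_range_lsmul_zz_pow n⟩
  · obtain ⟨m, hm, hmx⟩ := exists_minDegEq x
    rw [finrank_orbitTangent_of_minDegEq hmx] at hx
    obtain rfl : m = n := by omega
    exact hmx
  · obtain ⟨y, rfl⟩ := hx.1
    exact ⟨y, rfl⟩
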